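/- Let F = ℝ(x,y) be the field of rational functions in two variables over ℝ, and let K = K(x,y) be the kernel of a small-step walk, written as K = ã(y)x² + b̃(y)x + c̃(y) = a(x)y² + b(x)y + c(x), with K ≠ 0 and ã, c̃, a, c all nonzero. Suppose φ and ψ are ℝ-algebra automorphisms of F such that φ(y) = y and φ(x)·x·ã(y) = c̃(y), and ψ(x) = x and ψ(y)·y·a(x) = c(x), and suppose (φ∘ψ)ⁿ = id for some n ≥ 1. Then for every rational function u lying in the subfield ℝ(x) (functions of x alone) and every v ∈ ℝ(y) (functions of y alone), setting M = xy·(u + v)/K ∈ F, the alternating orbit sum vanishes: Σ_{k=0}^{n−1} (φ∘ψ)^k(M) − Σ_{k=0}^{n−1} ((φ∘ψ)^k ∘ φ)(M) = 0. -/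

import Mathlib

/-!
Split `M = y·v·(x/K) + x·u·(y/K)`. Since `K/x = ã·x + b̃ + c̃/x` and `φ` swaps the two
outer terms `ã·x` and `c̃/x`, `φ` fixes `x/K`; likewise `ψ` fixes `y/K`. Hence the first
summand is `φ`-invariant, so the two orbit sums agree term by term, while the second is
`ψ`-invariant, so `((φψ)^k φ)(m) = (φψ)^(k+1)(m)` and the second orbit sum is the first one
shifted cyclically by one, using `(φψ)^n = 1`.
-/

open Finset

/-- The field `ℝ(x,y)` of rational functions in two variables over `ℝ`. -/
noncomputable abbrev RatFuncXY : Type := FractionRing (MvPolynomial (Fin 2) ℝ)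

/-- The variable `x` in `ℝ(x,y)`. -/
noncomputable def Xvar : RatFuncXY :=
  algebraMap (MvPolynomial (Fin 2) ℝ) RatFuncXY (MvPolynomial.X 0)

/-- The variable `y` in `ℝ(x,y)`. -/
noncomputable def Yvar : RatFuncXY :=
  algebraMap (MvPolynomial (Fin 2) ℝ) RatFuncXY (MvPolynomial.X 1)

/-- The subfield `ℝ(x)` of `ℝ(x,y)`: rational functions of `x` alone. -/
noncomputable def subfieldX : Subfield RatFuncXY :=
  Subfield.closure (insert Xvar (Set.range (algebraMap ℝ RatFuncXY)))

/-- The subfield `ℝ(y)` of `ℝ(x,y)`: rational functions of `y` alone. -/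
noncomputable def subfieldY : Subfield RatFuncXY :=
  Subfield.closure (insert Yvar (Set.range (algebraMap ℝ RatFuncXY)))

theorem AlgEquiv.map_eq_self_of_mem_closure_insert_range_algebraMap {R F : Type*}
    [CommSemiring R] [Field F] [Algebra R F] (σ : F ≃ₐ[R] F) {t z : F} (ht : σ t = t)
    (hz : z ∈ Subfield.closure (insert t (Set.range (algebraMap R F)))) : σ z = z := by
  refine RingHom.eqOn_field_closure (f := (σ : F →+* F)) (g := RingHom.id F) ?_ hz
  rintro w (rfl | ⟨r, rfl⟩)
  · exact ht
  · exact σ.commutes r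

theorem map_div_quadratic_eq_self {F G : Type*} [Field F] [FunLike G F F] [RingHomClass G F F]
    (σ : G) {t A B C : F} (hA : σ A = A) (hB : σ B = B) (hC : σ C = C)
    (ht : σ t * t * A = C) :
    σ (t / (A * t ^ 2 + B * t + C)) = t / (A * t ^ 2 + B * t + C) := by
  have hσK : σ (A * t ^ 2 + B * t + C) = A * σ t ^ 2 + B * σ t + C := by
    simp only [map_add, map_mul, map_pow, hA, hB, hC]
  rcases eq_or_ne (A * t ^ 2 + B * t + C) 0 with hK0 | hK0
  · rw [hK0, div_zero, map_zero]
  rw [map_div₀, div_eq_div_iff ((map_ne_zero σ).mpr hK0) hK0, hσK]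
  linear_combination (t - σ t) * ht

section AlternatingOrbitSum

variable {R A : Type*} [CommSemiring R] [Ring A] [Algebra R A]

def altOrbitSum (φ ψ : A ≃ₐ[R] A) (n : ℕ) (m : A) : A :=
  (∑ k ∈ range n, ((φ * ψ) ^ k) m) - ∑ k ∈ range n, ((φ * ψ) ^ k * φ) m

theorem altOrbitSum_add (φ ψ : A ≃ₐ[R] A) (n : ℕ) (m m' : A) :
    altOrbitSum φ ψ n (m + m') = altOrbitSum φ ψ n m + altOrbitSum φ ψ n m' := by
  simp only [altOrbitSum, map_add, sum_add_distrib]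
  abel

theorem altOrbitSum_eq_zero_of_left_map_eq_self (φ ψ : A ≃ₐ[R] A) (n : ℕ) {m : A}
    (hm : φ m = m) : altOrbitSum φ ψ n m = 0 := by
  simp only [altOrbitSum, AlgEquiv.mul_apply, hm, sub_self]

theorem altOrbitSum_eq_zero_of_right_map_eq_self (φ ψ : A ≃ₐ[R] A) {n : ℕ}
    (hn : (φ * ψ) ^ n = 1) {m : A} (hm : ψ m = m) : altOrbitSum φ ψ n m = 0 := by
  have hstep : ∀ k, ((φ * ψ) ^ k * φ) m = ((φ * ψ) ^ (k + 1)) m := fun k => by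
    rw [pow_succ, AlgEquiv.mul_apply, AlgEquiv.mul_apply, AlgEquiv.mul_apply, hm]
  have hshift := (sum_range_succ' (fun k => ((φ * ψ) ^ k) m) n).symm.trans
    (sum_range_succ (fun k => ((φ * ψ) ^ k) m) n)
  rw [hn, pow_zero] at hshift
  simp only [altOrbitSum, hstep]
  exact sub_eq_zero.mpr (add_right_cancel hshift).symm

end AlternatingOrbitSum

theorem alternating_orbit_sum_vanishes_general
    (K : RatFuncXY)
    (atil btil ctil : RatFuncXY)
    (hatil : atil ∈ subfieldY) (hbtil : btil ∈ subfieldY) (hctil : ctil ∈ subfieldY)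
    (hKx : K = atil * Xvar ^ 2 + btil * Xvar + ctil)
    (a b c : RatFuncXY)
    (ha : a ∈ subfieldX) (hb : b ∈ subfieldX) (hc : c ∈ subfieldX)
    (hKy : K = a * Yvar ^ 2 + b * Yvar + c)
    (φ ψ : RatFuncXY ≃ₐ[ℝ] RatFuncXY)
    (hφy : φ Yvar = Yvar) (hφx : φ Xvar * Xvar * atil = ctil)
    (hψx : ψ Xvar = Xvar) (hψy : ψ Yvar * Yvar * a = c)
    (n : ℕ) (hord : (φ * ψ) ^ n = 1) :
    ∀ u ∈ subfieldX, ∀ v ∈ subfieldY,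
      (∑ k ∈ Finset.range n, ((φ * ψ) ^ k) (Xvar * Yvar * (u + v) / K)) -
        (∑ k ∈ Finset.range n, ((φ * ψ) ^ k * φ) (Xvar * Yvar * (u + v) / K)) = 0 := by
  intro u hu v hv
  have fixφ : ∀ z ∈ subfieldY, φ z = z := fun z hz =>
    φ.map_eq_self_of_mem_closure_insert_range_algebraMap hφy hz
  have fixψ : ∀ z ∈ subfieldX, ψ z = z := fun z hz =>
    ψ.map_eq_self_of_mem_closure_insert_range_algebraMap hψx hz
  have hφK : φ (Xvar / K) = Xvar / K := by
    rw [hKx]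
    exact map_div_quadratic_eq_self φ (fixφ _ hatil) (fixφ _ hbtil) (fixφ _ hctil) hφx
  have hψK : ψ (Yvar / K) = Yvar / K := by
    rw [hKy]
    exact map_div_quadratic_eq_self ψ (fixψ _ ha) (fixψ _ hb) (fixψ _ hc) hψy
  have hsplit : Xvar * Yvar * (u + v) / K = Yvar * v * (Xvar / K) + Xvar * u * (Yvar / K) := by
    ring
  change altOrbitSum φ ψ n _ = 0
  rw [hsplit, altOrbitSum_add,
    altOrbitSum_eq_zero_of_left_map_eq_self φ ψ n (by simp only [map_mul, hφy, fixφ v hv, hφK]),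
    altOrbitSum_eq_zero_of_right_map_eq_self φ ψ hord (by simp only [map_mul, hψx, fixψ u hu, hψK]),
    add_zero]

/-- Let `K` be the kernel of a small-step walk, written `K = ã(y)x² + b̃(y)x + c̃(y)
= a(x)y² + b(x)y + c(x)` with `K ≠ 0` and `ã, c̃, a, c` nonzero. Let `φ, ψ` be `ℝ`-algebra
automorphisms of `ℝ(x,y)` with `φ(y) = y`, `φ(x)·x·ã(y) = c̃(y)`, `ψ(x) = x`,
`ψ(y)·y·a(x) = c(x)`, and `(φ∘ψ)ⁿ = id` for some `n ≥ 1`. Then for every `u ∈ ℝ(x)` and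
`v ∈ ℝ(y)`, the alternating orbit sum of `M = xy(u+v)/K` vanishes:
`Σ_{k<n} (φψ)^k(M) − Σ_{k<n} ((φψ)^k φ)(M) = 0`. -/
theorem alternating_orbit_sum_vanishes
    (p : ℤ → ℤ → ℝ) (hp0 : ∀ u v : ℤ, 0 ≤ p u v)
    (hp1 : ∑ u ∈ ({-1, 0, 1} : Finset ℤ), ∑ v ∈ ({-1, 0, 1} : Finset ℤ), p u v = 1)
    (K : RatFuncXY)
    (hK : K = (∑ u ∈ ({-1, 0, 1} : Finset ℤ), ∑ v ∈ ({-1, 0, 1} : Finset ℤ),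
        algebraMap ℝ RatFuncXY (p u v) * Xvar ^ (1 - u).toNat * Yvar ^ (1 - v).toNat) -
      Xvar * Yvar)
    (hKne : K ≠ 0)
    (atil btil ctil : RatFuncXY)
    (hatil : atil ∈ subfieldY) (hbtil : btil ∈ subfieldY) (hctil : ctil ∈ subfieldY)
    (hKx : K = atil * Xvar ^ 2 + btil * Xvar + ctil)
    (hatilne : atil ≠ 0) (hctilne : ctil ≠ 0)
    (a b c : RatFuncXY)
    (ha : a ∈ subfieldX) (hb : b ∈ subfieldX) (hc : c ∈ subfieldX)
    (hKy : K = a * Yvar ^ 2 + b * Yvar + c)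
    (hane : a ≠ 0) (hcne : c ≠ 0)
    (φ ψ : RatFuncXY ≃ₐ[ℝ] RatFuncXY)
    (hφy : φ Yvar = Yvar) (hφx : φ Xvar * Xvar * atil = ctil)
    (hψx : ψ Xvar = Xvar) (hψy : ψ Yvar * Yvar * a = c)
    (n : ℕ) (hn : 1 ≤ n) (hord : (φ * ψ) ^ n = 1) :
    ∀ u ∈ subfieldX, ∀ v ∈ subfieldY,
      (∑ k ∈ Finset.range n, ((φ * ψ) ^ k) (Xvar * Yvar * (u + v) / K)) -
        (∑ k ∈ Finset.range n, ((φ * ψ) ^ k * φ) (Xvar * Yvar * (u + v) / K)) = 0 :=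
  alternating_orbit_sum_vanishes_general K atil btil ctil hatil hbtil hctil hKx a b c ha hb hc hKy φ
    ψ hφy hφx hψx hψy n hord
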